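/- arXiv:2208.07696 — 10 statements merged into one kernel-verified Lean document; each statement's English description precedes it below -/
import Mathlib

section
/- Let θ = (a/b)·2π with a, b integers, b even and positive, and let r ∈ (0,1). Then arg(1 + r·e^{iθ}) = Σ_{k=0}^∞ (1/r^b)^{-k} Σ_{j=1}^b r^j (-1)^{j+1} sin(jθ) / (bk + j). In particular, arg(1 + r·e^{iθ}) is given by a BBP-type formula of degree 1 in base r^{-b} with length b and coefficients a_j = r^j (-1)^{j+1} sin(jθ). -/
open Real Complex

theorem bbp_main (a : ℤ) (b : ℕ) (hb : Even b) (hbpos : 0 < b)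
    (r : ℝ) (hr : r ∈ Set.Ioo (0:ℝ) 1)
    (θ : ℝ) (hθ : θ = (a / b) * (2 * π)) :
    Complex.arg (1 + (r : ℂ) * Complex.exp (θ * Complex.I)) =
      ∑' k : ℕ, ((1 / r ^ b) ^ (-(k : ℤ))) *
        ∑ j ∈ Finset.Icc 1 b,
          r ^ j * (-1 : ℝ) ^ (j + 1) * Real.sin (j * θ) / (b * k + j) := by
  haveI : NeZero b := ⟨hbpos.ne'⟩
  obtain ⟨hr0, hr1⟩ := hr
  set z : ℂ := (r : ℂ) * Complex.exp (θ * Complex.I) with hz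
  have hnz : ‖z‖ < 1 := by
    rw [hz]
    simp [Complex.norm_exp, abs_of_pos hr0, hr1]
  -- the log Taylor series, imaginary part
  have h1 := Complex.hasSum_im (hasSum_taylorSeries_log hnz)
  rw [Complex.log_im] at h1
  -- compute the imaginary part of each term
  have him : ∀ n : ℕ, ((-1) ^ (n + 1) * z ^ n / (n : ℂ)).im
      = (-1 : ℝ) ^ (n + 1) * r ^ n * Real.sin (n * θ) / n := by
    intro n
    have hzn : z ^ n = ((r ^ n : ℝ) : ℂ) * Complex.exp ((n * θ : ℝ) * Complex.I) := by
      rw [hz, mul_pow, ← Complex.exp_nat_mul]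
      push_cast
      ring_nf
    rw [hzn]
    have : ((-1 : ℂ)) ^ (n + 1) * (((r ^ n : ℝ) : ℂ) * Complex.exp ((n * θ : ℝ) * Complex.I))
        / (n : ℂ)
        = ((((-1 : ℝ) ^ (n + 1) * r ^ n / n : ℝ)) : ℂ) * Complex.exp ((n * θ : ℝ) * Complex.I) := by
      push_cast
      ring
    rw [this, Complex.im_ofReal_mul, Complex.exp_ofReal_mul_I_im]
    ring
  set g : ℕ → ℝ := fun n => (-1 : ℝ) ^ (n + 1) * r ^ n * Real.sin (n * θ) / n with hg
  have h2 : HasSum g (Complex.arg (1 + z)) := by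
    have := h1
    simp only [him] at this
    exact this
  have hg0 : g 0 = 0 := by simp [hg]
  have h3 : HasSum (fun n => g (n + 1)) (Complex.arg (1 + z)) := by
    have := (hasSum_nat_add_iff' (f := g) 1).mpr h2
    simpa [hg0] using this
  have h4 := (Nat.divModEquiv b).symm.hasSum_iff.mpr h3
  dsimp [Function.comp_def, Nat.divModEquiv] at h4
  -- now group fibers
  rw [eq_comm]
  refine HasSum.tsum_eq ?_
  refine h4.prod_fiberwise fun k => ?_
  dsimp only
  convert hasSum_fintype (fun j : Fin b => g (k * b + (j : ℕ) + 1)) using 1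
  rw [show (∑ j : Fin b, g (k * b + (j : ℕ) + 1))
      = ∑ i ∈ Finset.range b, g (k * b + i + 1) from
      Fin.sum_univ_eq_sum_range (fun i => g (k * b + i + 1)) b,
    ← Finset.Ico_add_one_right_eq_Icc, Finset.sum_Ico_eq_sum_range]
  rw [Finset.mul_sum]
  refine Finset.sum_congr rfl fun i hi => ?_
  have hrb : r ^ b ≠ 0 := pow_ne_zero _ hr0.ne'
  have hzpow : ((1 / r ^ b) ^ (-(k : ℤ)) : ℝ) = r ^ (b * k) := by
    rw [one_div, zpow_neg, inv_zpow, inv_inv, zpow_natCast, ← pow_mul]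
  rw [hzpow]
  simp only [hg]
  have hn : k * b + i + 1 = b * k + (1 + i) := by ring
  rw [hn]
  have hsign : (-1 : ℝ) ^ (b * k + (1 + i) + 1) = (-1 : ℝ) ^ ((1 + i) + 1) := by
    rw [show b * k + (1 + i) + 1 = b * k + ((1 + i) + 1) by ring, pow_add]
    have : Even (b * k) := hb.mul_right k
    rw [this.neg_one_pow, one_mul]
  have hbne : (b : ℝ) ≠ 0 := Nat.cast_ne_zero.mpr hbpos.ne'
  have hsin : Real.sin (((b * k + (1 + i) : ℕ) : ℝ) * θ)
      = Real.sin (((1 + i : ℕ) : ℝ) * θ) := by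
    have harg : ((b * k + (1 + i) : ℕ) : ℝ) * θ
        = ((1 + i : ℕ) : ℝ) * θ + ((a * k : ℤ) : ℝ) * (2 * π) := by
      push_cast
      rw [hθ]
      field_simp
      ring
    rw [harg, Real.sin_add_int_mul_two_pi]
  rw [hsign, hsin, pow_add]
  push_cast
  ring
end

section
/- π/4 = Σ_{k=0}^∞ (1/16^k) · [ (1/2)/(8k+1) + (1/2)/(8k+2) + (1/4)/(8k+3) + (−1/8)/(8k+5) + (−1/8)/(8k+6) + (−1/16)/(8k+7) ]. -/
open Real Complex

noncomputable def vv : ℂ := (1 - Complex.I)/2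

lemma vv_norm : ‖vv‖ < 1 := by
  have h1 : ‖vv‖^2 = 1/2 := by
    rw [Complex.sq_norm]
    simp [vv, Complex.normSq_apply, Complex.div_re, Complex.div_im, Complex.normSq_apply]
    norm_num
  nlinarith [norm_nonneg vv]

lemma step1 : HasSum (fun n : ℕ => (-(vv ^ n / n)).im) (π/4) := by
  have h := Complex.hasSum_taylorSeries_neg_log vv_norm
  have h2 := (Complex.imCLM.hasSum h.neg)
  simp only [Complex.imCLM_apply] at h2
  convert h2 using 2
  rw [neg_neg]
  have hv : (1 : ℂ) - vv = (1 + Complex.I)/2 := by rw [vv]; ring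
  rw [hv, Complex.log_im]
  have hs : ((Real.sqrt 2 : ℝ) : ℂ) * ((Real.sqrt 2 : ℝ) : ℂ) = 2 := by
    norm_cast
    rw [Real.mul_self_sqrt (by norm_num : (0:ℝ) ≤ 2)]
  have key : ((1 + Complex.I)/2 : ℂ)
      = (Real.sqrt 2 / 2 : ℝ) * (Complex.cos (π/4 : ℝ) + Complex.sin (π/4 : ℝ) * Complex.I) := by
    rw [← Complex.ofReal_cos, ← Complex.ofReal_sin, Real.cos_pi_div_four, Real.sin_pi_div_four]
    push_cast
    linear_combination (-(1+Complex.I)/4) * hs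
  rw [key, Complex.arg_real_mul _ (by positivity),
    Complex.arg_cos_add_sin_mul_I ⟨by linarith [Real.pi_pos], by linarith [Real.pi_pos]⟩]

lemma vv_sq : vv^2 = -Complex.I/2 := by
  rw [vv]; linear_combination (1/4 : ℂ) * Complex.I_sq

lemma vv_8 : vv^8 = ((16⁻¹ : ℝ) : ℂ) := by
  rw [show (8:ℕ)=2*4 from rfl, pow_mul, vv_sq]
  push_cast
  linear_combination ((Complex.I^2 - 1)/16) * Complex.I_sq

lemma term_im (k n : ℕ) : -(vv ^ (k*8 + n) / ((k*8+n : ℕ) : ℂ)).im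
    = (1/16^k : ℝ) * ((-(vv^n).im) / (8*k+n)) := by
  rw [show k*8+n = 8*k+n by ring, pow_add, pow_mul, vv_8, ← Complex.ofReal_pow]
  simp only [mul_div_assoc, Complex.mul_im, Complex.ofReal_re,
    Complex.ofReal_im, Complex.div_natCast_im, Complex.div_natCast_re, zero_mul, add_zero]
  push_cast
  ring_nf
  norm_num

theorem pi_div_four_bbp :
    π / 4 = ∑' k : ℕ, (1 / 16 ^ k : ℝ) *
      ((1 / 2) / (8 * k + 1) + (1 / 2) / (8 * k + 2) + (1 / 4) / (8 * k + 3)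
        + (-1 / 8) / (8 * k + 5) + (-1 / 8) / (8 * k + 6) + (-1 / 16) / (8 * k + 7)) := by
  have h2 := (Nat.divModEquiv 8).symm.hasSum_iff.mpr step1
  dsimp [Function.comp_def] at h2
  refine (HasSum.tsum_eq (h2.prod_fiberwise fun k => ?_)).symm
  convert hasSum_fintype (_ : Fin 8 → ℝ) using 1
  rw [Fin.sum_univ_eight]
  simp only [Nat.divModEquiv_symm_apply]
  simp only [show ((0:Fin 8):ℕ) = 0 from rfl, show ((1:Fin 8):ℕ) = 1 from rfl,
    show ((2:Fin 8):ℕ) = 2 from rfl, show ((3:Fin 8):ℕ) = 3 from rfl,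
    show ((4:Fin 8):ℕ) = 4 from rfl, show ((5:Fin 8):ℕ) = 5 from rfl,
    show ((6:Fin 8):ℕ) = 6 from rfl, show ((7:Fin 8):ℕ) = 7 from rfl]
  simp only [term_im]
  norm_num [pow_succ, vv, Complex.div_im, Complex.div_re, Complex.mul_im, Complex.mul_re,
    Complex.normSq_apply]
  ring
end

section
/- The three complex numbers 0, 1 + 2^{−1/2}·e^{(5/12)πi}, and 1 + 2^{−1/2}·e^{(11/12)πi} are collinear in the complex plane; equivalently, arg(1 + 2^{−1/2}e^{5πi/12}) = arg(1 + 2^{−1/2}e^{11πi/12}). -/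
/-!
Write the two points as `1 + r e^{i(σ ± δ)}` with `r = 1/√2`, `σ = 2π/3`, `δ = -π/4`.
Multiplying the first by the conjugate of the second gives `1 + 2 cos σ · ζ + ζ²` with
`ζ = r e^{iδ} = (1 - i)/2`, that is `1 - ζ + ζ² = 1/2`. A product `w · conj z` that is a positive
real number forces `arg w = arg z`.
-/

open Real Complex
open ComplexConjugate

theorem arg_eq_arg_of_mul_conj_eq_ofReal {z w : ℂ} {t : ℝ} (ht : 0 < t) (h : w * conj z = t) :
    arg w = arg z := by
  have hz : z ≠ 0 := by
    rintro rfl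
    simp only [map_zero, mul_zero] at h
    exact ht.ne' (by exact_mod_cast h.symm)
  have hw : w = ((t / normSq z : ℝ) : ℂ) * z := by
    have : conj z ≠ 0 := (map_ne_zero _).2 hz
    rw [ofReal_div, ← h, ← mul_conj]
    field_simp
  rw [hw, arg_real_mul _ (div_pos ht (normSq_pos.2 hz))]

theorem one_add_mul_exp_mul_conj (r σ δ : ℝ) :
    (1 + r * exp (↑(σ + δ) * I)) * conj (1 + r * exp (↑(σ - δ) * I)) =
      1 + 2 * Real.cos σ * (r * exp (δ * I)) + (r * exp (δ * I)) ^ 2 := by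
  have hconj : ∀ x : ℝ, conj (exp (x * I)) = exp (-x * I) := by
    intro x; rw [← exp_conj]; simp
  have hcos : (2 * Real.cos σ : ℂ) = exp (σ * I) + exp (-σ * I) := by
    rw [ofReal_cos, two_cos]
  have hinv : exp (σ * I) * exp (-σ * I) = 1 := by rw [← Complex.exp_add]; simp
  have hsum : exp (↑(σ + δ) * I) = exp (σ * I) * exp (δ * I) := by
    rw [← Complex.exp_add]; push_cast; ring_nf
  have hdiff : exp (-↑(σ - δ) * I) = exp (-σ * I) * exp (δ * I) := by
    rw [← Complex.exp_add]; push_cast; ring_nf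
  simp only [map_add, map_one, map_mul, conj_ofReal, hconj, hsum, hdiff]
  linear_combination (-r * exp (δ * I)) * hcos + r ^ 2 * exp (δ * I) ^ 2 * hinv

theorem Real.cos_two_mul_pi_div_three : Real.cos (2 * π / 3) = -(1 / 2) := by
  rw [show 2 * π / 3 = π - π / 3 by ring, Real.cos_pi_sub, Real.cos_pi_div_three]

theorem inv_sqrt_two_mul_exp_neg_pi_div_four_mul_I :
    ((1 / √2 : ℝ) : ℂ) * exp (↑(-(π / 4)) * I) = (1 - I) / 2 := by
  have hsqrt2 : (√2 : ℂ) ≠ 0 := by exact_mod_cast (Real.sqrt_pos.2 zero_lt_two).ne'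
  rw [exp_mul_I, ← ofReal_cos, ← ofReal_sin, Real.cos_neg, Real.sin_neg, cos_pi_div_four,
    sin_pi_div_four]
  push_cast
  field_simp
  ring

theorem lafont_collinear :
    Complex.arg (1 + (1 / Real.sqrt 2 : ℝ) * Complex.exp (((5 / 12 : ℝ) * π) * Complex.I)) =
    Complex.arg (1 + (1 / Real.sqrt 2 : ℝ) * Complex.exp (((11 / 12 : ℝ) * π) * Complex.I)) := by
  refine arg_eq_arg_of_mul_conj_eq_ofReal (t := 1 / 2) (by norm_num) ?_
  have h := one_add_mul_exp_mul_conj (1 / √2) (2 * π / 3) (-(π / 4))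
  rw [show 2 * π / 3 + -(π / 4) = 5 / 12 * π by ring,
    show 2 * π / 3 - -(π / 4) = 11 / 12 * π by ring,
    Real.cos_two_mul_pi_div_three, inv_sqrt_two_mul_exp_neg_pi_div_four_mul_I] at h
  push_cast at h ⊢
  rw [h]
  linear_combination (1 / 4 : ℂ) * I_sq
end

section
/- Lafont's null formula: Σ_{k=0}^∞ (1/2^{12})^k Σ_{j=1}^{24} [ (1/√2)^j (−1)^{j+1} ( sin(2πj·5/24) − sin(2πj·11/24) ) ] / (24k + j) = 0. -/
open Real

noncomputable def lafZ (θ : ℝ) : ℂ := (((Real.sqrt 2)⁻¹ : ℝ) : ℂ) * -(Complex.exp ((θ : ℂ) * Complex.I))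

lemma lafZ_norm (θ : ℝ) : ‖lafZ θ‖ < 1 := by
  have h1 : (1:ℝ) < Real.sqrt 2 := by
    nlinarith [Real.sq_sqrt (by norm_num : (0:ℝ) ≤ 2), Real.sqrt_nonneg 2]
  have : ‖lafZ θ‖ = (Real.sqrt 2)⁻¹ := by
    simp [lafZ, Complex.norm_exp_ofReal_mul_I,
      abs_of_nonneg (inv_nonneg.mpr (Real.sqrt_nonneg 2))]
  rw [this]
  rw [inv_lt_one_iff₀]
  right; exact h1

lemma lafZ_pow_im (θ : ℝ) (n : ℕ) :
    ((lafZ θ) ^ n).im = (-1) ^ n * ((Real.sqrt 2)⁻¹) ^ n * Real.sin (n * θ) := by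
  have he : Complex.exp ((θ:ℂ) * Complex.I) ^ n
      = Complex.exp ((((n:ℝ) * θ : ℝ) : ℂ) * Complex.I) := by
    rw [← Complex.exp_nat_mul]; push_cast; ring_nf
  have h1 : (lafZ θ) ^ n
      = (((-1:ℝ) ^ n * ((Real.sqrt 2)⁻¹) ^ n : ℝ) : ℂ)
        * Complex.exp ((((n:ℝ) * θ : ℝ) : ℂ) * Complex.I) := by
    rw [lafZ, mul_pow, neg_pow, he]; push_cast; ring
  rw [h1, Complex.im_ofReal_mul, Complex.exp_ofReal_mul_I_im]

lemma laf_cos_pi_div_twelve : Real.cos (π/12) = Real.sqrt 2 * (1 + Real.sqrt 3) / 4 := by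
  have h : (π/12 : ℝ) = π/3 - π/4 := by ring
  rw [h, Real.cos_sub, Real.cos_pi_div_three, Real.sin_pi_div_three,
    Real.cos_pi_div_four, Real.sin_pi_div_four]
  ring

lemma laf_sin_pi_div_twelve : Real.sin (π/12) = Real.sqrt 2 * (Real.sqrt 3 - 1) / 4 := by
  have h : (π/12 : ℝ) = π/3 - π/4 := by ring
  rw [h, Real.sin_sub, Real.cos_pi_div_three, Real.sin_pi_div_three,
    Real.cos_pi_div_four, Real.sin_pi_div_four]
  ring

lemma laf_w_eq : (1 : ℂ) - lafZ (2*π*5/24) = (((2 + Real.sqrt 3 : ℝ)) : ℂ) * ((1 : ℂ) - lafZ (2*π*11/24)) := by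
  have h2 : Real.sqrt 2 ^ 2 = 2 := Real.sq_sqrt (by norm_num)
  have h2p : (0:ℝ) < Real.sqrt 2 := Real.sqrt_pos.mpr (by norm_num)
  have hc5 : Real.cos (2*π*5/24) = Real.sin (π/12) := by
    rw [show (2*π*5/24 : ℝ) = π/2 - π/12 by ring, Real.cos_pi_div_two_sub]
  have hs5 : Real.sin (2*π*5/24) = Real.cos (π/12) := by
    rw [show (2*π*5/24 : ℝ) = π/2 - π/12 by ring, Real.sin_pi_div_two_sub]
  have hc11 : Real.cos (2*π*11/24) = -Real.cos (π/12) := by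
    rw [show (2*π*11/24 : ℝ) = π - π/12 by ring, Real.cos_pi_sub]
  have hs11 : Real.sin (2*π*11/24) = Real.sin (π/12) := by
    rw [show (2*π*11/24 : ℝ) = π - π/12 by ring, Real.sin_pi_sub]
  apply Complex.ext
  · simp only [lafZ, Complex.sub_re, Complex.one_re, Complex.re_ofReal_mul, Complex.neg_re,
      Complex.exp_ofReal_mul_I_re, Complex.mul_re, Complex.ofReal_re, Complex.ofReal_im,
      Complex.sub_im, Complex.one_im, Complex.im_ofReal_mul, Complex.neg_im,
      Complex.exp_ofReal_mul_I_im]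
    rw [hc5, hc11, laf_sin_pi_div_twelve, laf_cos_pi_div_twelve]
    field_simp
    nlinarith [Real.sq_sqrt (by norm_num : (0:ℝ) ≤ 3), Real.sqrt_nonneg 3]
  · simp only [lafZ, Complex.sub_re, Complex.one_re, Complex.re_ofReal_mul, Complex.neg_re,
      Complex.exp_ofReal_mul_I_re, Complex.mul_im, Complex.ofReal_re, Complex.ofReal_im,
      Complex.sub_im, Complex.one_im, Complex.im_ofReal_mul, Complex.neg_im,
      Complex.exp_ofReal_mul_I_im]
    rw [hs5, hs11, laf_cos_pi_div_twelve, laf_sin_pi_div_twelve]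
    field_simp
    nlinarith [Real.sq_sqrt (by norm_num : (0:ℝ) ≤ 3), Real.sqrt_nonneg 3]

lemma laf_hasSum : HasSum
    (fun n : ℕ => ((lafZ (2*π*11/24) ^ n - lafZ (2*π*5/24) ^ n) / n : ℂ).im) 0 := by
  have h11 := Complex.hasSum_taylorSeries_neg_log (lafZ_norm (2*π*11/24))
  have h5 := Complex.hasSum_taylorSeries_neg_log (lafZ_norm (2*π*5/24))
  have h := Complex.hasSum_im (h11.sub h5)
  have hv : (-Complex.log (1 - lafZ (2*π*11/24)) - -Complex.log (1 - lafZ (2*π*5/24))).im = 0 := by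
    have harg : (Complex.log (1 - lafZ (2*π*5/24))).im
        = (Complex.log (1 - lafZ (2*π*11/24))).im := by
      rw [Complex.log_im, Complex.log_im, laf_w_eq]
      exact Complex.arg_real_mul _ (by nlinarith [Real.sqrt_nonneg 3])
    simp [Complex.sub_im, Complex.neg_im, harg]
  rw [hv] at h
  convert h using 2 with n
  simp [sub_div]

noncomputable def lafF (n : ℕ) : ℝ :=
  ((1 / Real.sqrt 2) ^ n * (-1 : ℝ) ^ (n + 1) *
      (Real.sin (2 * π * n * 5 / 24) - Real.sin (2 * π * n * 11 / 24))) / n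

lemma lafF_eq (n : ℕ) :
    lafF n = ((lafZ (2*π*11/24) ^ n - lafZ (2*π*5/24) ^ n) / n : ℂ).im := by
  have him : ((lafZ (2*π*11/24) ^ n - lafZ (2*π*5/24) ^ n) / n : ℂ).im
      = ((lafZ (2*π*11/24) ^ n).im - (lafZ (2*π*5/24) ^ n).im) / n := by
    rw [show ((n:ℂ)) = ((n:ℝ):ℂ) by push_cast; rfl, Complex.div_ofReal_im, Complex.sub_im]
  rw [him, lafZ_pow_im, lafZ_pow_im,
    show ((n:ℝ) * (2*π*11/24)) = 2*π*n*11/24 by ring,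
    show ((n:ℝ) * (2*π*5/24)) = 2*π*n*5/24 by ring, lafF, one_div, pow_succ]
  ring

lemma lafF_hasSum : HasSum lafF 0 := by
  have := laf_hasSum
  convert this using 1
  exact funext lafF_eq

lemma lafF_zero : lafF 0 = 0 := by simp [lafF]

set_option maxHeartbeats 1000000 in
theorem lafont_null_formula :
    ∑' k : ℕ, (1 / 2 ^ 12 : ℝ) ^ k *
      ∑ j ∈ Finset.Icc (1:ℕ) 24,
        ((1 / Real.sqrt 2) ^ j * (-1 : ℝ) ^ (j + 1) *
            (Real.sin (2 * π * j * 5 / 24) - Real.sin (2 * π * j * 11 / 24))) /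
          (24 * k + j) = 0 := by
  have hterm : ∀ k j : ℕ, 1 ≤ j → j ≤ 24 →
      (1 / 2 ^ 12 : ℝ) ^ k *
        (((1 / Real.sqrt 2) ^ j * (-1 : ℝ) ^ (j + 1) *
            (Real.sin (2 * π * j * 5 / 24) - Real.sin (2 * π * j * 11 / 24))) /
          (24 * k + j)) = lafF (24 * k + j) := by
    intro k j _ _
    have hpow : ((1 / Real.sqrt 2 : ℝ)) ^ (24 * k + j)
        = (1 / 2 ^ 12 : ℝ) ^ k * (1 / Real.sqrt 2) ^ j := by
      rw [pow_add, pow_mul]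
      congr 2
      rw [show (24 = 2 * 12) from rfl, pow_mul, div_pow, one_pow, Real.sq_sqrt (by norm_num)]
      norm_num
    have hneg : ((-1 : ℝ)) ^ (24 * k + j + 1) = (-1 : ℝ) ^ (j + 1) := by
      rw [show 24 * k + j + 1 = 24 * k + (j + 1) from rfl, pow_add, pow_mul]
      norm_num
    have hsin5 : Real.sin (2 * π * (24 * k + j : ℕ) * 5 / 24) = Real.sin (2 * π * j * 5 / 24) := by
      rw [show (2 * π * ((24 * k + j : ℕ) : ℝ) * 5 / 24) = 2 * π * j * 5 / 24 + (5 * k : ℕ) * (2 * π) by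
        push_cast; ring]
      exact Real.sin_add_nat_mul_two_pi _ _
    have hsin11 : Real.sin (2 * π * (24 * k + j : ℕ) * 11 / 24) = Real.sin (2 * π * j * 11 / 24) := by
      rw [show (2 * π * ((24 * k + j : ℕ) : ℝ) * 11 / 24) = 2 * π * j * 11 / 24 + (11 * k : ℕ) * (2 * π) by
        push_cast; ring]
      exact Real.sin_add_nat_mul_two_pi _ _
    rw [lafF, hpow, hneg, hsin5, hsin11]
    push_cast
    ring
  have hf : Summable lafF := lafF_hasSum.summable
  have hf1 : Summable (fun n => lafF (n + 1)) :=
    hf.comp_injective (add_left_injective 1)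
  have hshift : ∑' n : ℕ, lafF (n + 1) = 0 := by
    have h0 := Summable.tsum_eq_zero_add hf
    rw [lafF_hasSum.tsum_eq, lafF_zero, zero_add] at h0
    exact h0.symm
  have hprodsum : Summable (fun p : ℕ × Fin 24 => lafF (p.1 * 24 + (p.2 : ℕ) + 1)) :=
    ((Nat.divModEquiv 24).symm.summable_iff).mpr hf1
  have hprod : ∑' p : ℕ × Fin 24, lafF (p.1 * 24 + (p.2 : ℕ) + 1) = 0 := by
    rw [← hshift]
    exact Equiv.tsum_eq (Nat.divModEquiv 24).symm (fun n => lafF (n + 1))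
  calc ∑' k : ℕ, (1 / 2 ^ 12 : ℝ) ^ k *
      ∑ j ∈ Finset.Icc (1:ℕ) 24,
        ((1 / Real.sqrt 2) ^ j * (-1 : ℝ) ^ (j + 1) *
            (Real.sin (2 * π * j * 5 / 24) - Real.sin (2 * π * j * 11 / 24))) /
          (24 * k + j)
      = ∑' k : ℕ, ∑ j ∈ Finset.Icc (1:ℕ) 24, lafF (24 * k + j) := by
        refine tsum_congr fun k => ?_
        rw [Finset.mul_sum]
        refine Finset.sum_congr rfl fun j hj => ?_
        obtain ⟨h1, h2⟩ := Finset.mem_Icc.mp hj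
        exact hterm k j h1 h2
    _ = ∑' k : ℕ, ∑ r : Fin 24, lafF (k * 24 + (r : ℕ) + 1) := by
        refine tsum_congr fun k => ?_
        rw [show Finset.Icc (1:ℕ) 24 = Finset.Ico (1:ℕ) 25 by rfl, Finset.sum_Ico_eq_sum_range]
        rw [Fin.sum_univ_eq_sum_range (fun r => lafF (k * 24 + r + 1))]
        refine Finset.sum_congr (by norm_num) fun i _ => ?_
        congr 1
        ring
    _ = ∑' p : ℕ × Fin 24, lafF (p.1 * 24 + (p.2 : ℕ) + 1) := by
        rw [Summable.tsum_prod' hprodsum (fun a => (hprodsum.prod_factor a))]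
        refine tsum_congr fun k => ?_
        exact (tsum_fintype _).symm
    _ = 0 := hprod
end

section
/- √3·π = 3√3 · [ BBP(1, 2^{12}, 24, CTB_{24}(1/√2, 5)) + BBP(1, 2^{12}, 24, CTB_{24}(1/√2, 11)) ], i.e. arg(1 + 2^{−1/2}e^{5πi/12}) + arg(1 + 2^{−1/2}e^{11πi/12}) = π/3. -/
open Real Complex

set_option maxHeartbeats 1000000


lemma hasSum_arg_aux (r θ : ℝ) (hr : |r| < 1) :
    HasSum (fun n : ℕ => (-1:ℝ)^(n+1) * r^n * Real.sin (n*θ) / n)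
      (Complex.arg (1 + (r:ℂ) * Complex.exp (θ * Complex.I))) := by
  set z : ℂ := (r:ℂ) * Complex.exp (θ * Complex.I) with hz
  have hzn : ‖z‖ < 1 := by
    rw [hz, norm_mul, Complex.norm_exp_ofReal_mul_I, mul_one, Complex.norm_real]
    simpa using hr
  have h := Complex.hasSum_taylorSeries_log hzn
  have him : HasSum (fun n : ℕ => ((-1:ℂ) ^ (n+1) * z ^ n / n).im)
      ((Complex.log (1+z)).im) := (Complex.hasSum_iff _ _).mp h |>.2
  rw [Complex.log_im] at him
  convert him using 2 with n
  have hzp : z ^ n = ((r ^ n : ℝ) : ℂ) * Complex.exp ((n * θ : ℝ) * Complex.I) := by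
    rw [hz, mul_pow, ← Complex.exp_nat_mul]
    push_cast
    ring_nf
  rw [hzp]
  have : (-1:ℂ) ^ (n+1) * (((r ^ n : ℝ) : ℂ) * Complex.exp ((n * θ : ℝ) * Complex.I)) / n
      = (((-1:ℝ)^(n+1) * r^n / n : ℝ) : ℂ) * Complex.exp ((n * θ : ℝ) * Complex.I) := by
    push_cast
    ring
  rw [this, Complex.im_ofReal_mul, Complex.exp_ofReal_mul_I_im]
  ring

lemma re_pos_aux (s θ : ℝ) (hs0 : 0 < s) (hs1 : s < 1) :
    0 < (1 + (s:ℂ) * Complex.exp ((θ:ℝ) * Complex.I)).re := by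
  have : (1 + (s:ℂ) * Complex.exp ((θ:ℝ) * Complex.I)).re = 1 + s * Real.cos θ := by
    simp [Complex.add_re, Complex.re_ofReal_mul, Complex.exp_ofReal_mul_I_re]
  rw [this]
  nlinarith [Real.neg_one_le_cos θ, Real.cos_le_one θ]

lemma expand_exp (x : ℝ) : Complex.exp ((x:ℝ) * Complex.I)
    = ((Real.cos x : ℝ) : ℂ) + ((Real.sin x : ℝ) : ℂ) * Complex.I := by
  rw [Complex.exp_mul_I, Complex.ofReal_cos, Complex.ofReal_sin]


lemma bbp_eq (a : ℕ) :
    HasSum (fun k : ℕ => (1 / 2 ^ 12 : ℝ) ^ k *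
          ∑ j ∈ Finset.Icc (1:ℕ) 24,
            ((1 / Real.sqrt 2) ^ j * (-1 : ℝ) ^ (j + 1) * Real.sin (2 * π * j * a / 24)) /
              (24 * k + j))
      (Complex.arg (1 + ((1 / Real.sqrt 2 : ℝ) : ℂ) *
        Complex.exp (((a / 12 : ℝ) * π : ℝ) * Complex.I))) := by
  set r : ℝ := 1 / Real.sqrt 2 with hrdef
  have hs2 : (0:ℝ) < Real.sqrt 2 := Real.sqrt_pos.mpr (by norm_num)
  have hs2' : (1:ℝ) < Real.sqrt 2 := by
    nlinarith [Real.sq_sqrt (by norm_num : (0:ℝ) ≤ 2)]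
  have hr24 : r ^ 24 = 1 / 2 ^ 12 := by
    have : r ^ 2 = 1 / 2 := by
      rw [hrdef, div_pow, one_pow, Real.sq_sqrt (by norm_num : (0:ℝ) ≤ 2)]
    calc r ^ 24 = (r ^ 2) ^ 12 := by ring
    _ = 1 / 2 ^ 12 := by rw [this]; norm_num
  have hr : |r| < 1 := by
    rw [abs_of_pos (by positivity), hrdef, div_lt_one hs2]
    exact hs2'
  set θ : ℝ := (a / 12 : ℝ) * π with hθdef
  set f : ℕ → ℝ := fun n => (-1:ℝ)^(n+1) * r^n * Real.sin (n*θ) / n with hf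
  have hs := hasSum_arg_aux r θ hr
  have hf0 : f 0 = 0 := by simp [hf]
  have h1 : HasSum (fun n => f (n+1)) (Complex.arg (1 + (r:ℂ) * Complex.exp (θ * Complex.I))) := by
    refine (hasSum_nat_add_iff 1).mpr ?_
    simpa [hf0] using hs
  have h2e := (Nat.divModEquiv 24).symm.hasSum_iff.mpr h1
  have h3 : HasSum (fun k : ℕ => ∑ i : Fin 24, f (k * 24 + ↑i + 1))
      (Complex.arg (1 + (r:ℂ) * Complex.exp (θ * Complex.I))) :=
    h2e.prod_fiberwise fun k => hasSum_fintype _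
  convert h3 using 2 with k
  rw [← Finset.Ico_add_one_right_eq_Icc, Finset.sum_Ico_eq_sum_range]
  norm_num only
  rw [← Fin.sum_univ_eq_sum_range, Finset.mul_sum]
  refine Finset.sum_congr rfl fun i _ => ?_
  obtain ⟨n, hn⟩ := i
  simp only [hf]
  have hm1 : (-1:ℝ) ^ (k * 24 + n + 1 + 1) = (-1:ℝ) ^ (1 + n + 1) := by
    rw [show k * 24 + n + 1 + 1 = (1 + n + 1) + k * 24 by ring, pow_add,
      Even.neg_one_pow (n := k * 24) ⟨k * 12, by ring⟩, mul_one]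
  have hrm : r ^ (k * 24 + n + 1) = (1 / 4096 : ℝ) ^ k * r ^ (1 + n) := by
    rw [show k * 24 + n + 1 = (1 + n) + 24 * k by ring, pow_add, pow_mul, hr24, mul_comm]
    norm_num
  have hsin : Real.sin ((k * 24 + n + 1 : ℕ) * θ) = Real.sin (2 * π * ((1 + n : ℕ):ℝ) * a / 24) := by
    have harg : ((k * 24 + n + 1 : ℕ) : ℝ) * θ = 2 * π * ((1 + n : ℕ):ℝ) * a / 24 + (k * a : ℕ) * (2 * π) := by
      rw [hθdef]; push_cast; ring
    rw [harg, Real.sin_add_nat_mul_two_pi]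
  have hden : ((k * 24 + n + 1 : ℕ) : ℝ) = 24 * (k:ℝ) + ((1 + n : ℕ) : ℝ) := by push_cast; ring
  show (1 / 4096 : ℝ) ^ k * (r ^ (1 + n) * (-1:ℝ) ^ (1 + n + 1) * Real.sin (2 * π * ((1+n:ℕ):ℝ) * a / 24) / (24 * (k:ℝ) + ((1+n:ℕ):ℝ)))
    = (-1:ℝ) ^ (k * 24 + n + 1 + 1) * r ^ (k * 24 + n + 1) * Real.sin (((k * 24 + n + 1 : ℕ):ℝ) * θ) / ((k * 24 + n + 1 : ℕ):ℝ)
  rw [hm1, hrm, hsin, hden]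
  ring

lemma arg_part :
    Complex.arg (1 + (1 / Real.sqrt 2 : ℝ) * Complex.exp (((5 / 12 : ℝ) * π) * Complex.I)) +
      Complex.arg (1 + (1 / Real.sqrt 2 : ℝ) * Complex.exp (((11 / 12 : ℝ) * π) * Complex.I))
        = π / 3 := by
  rw [show ((5/12 : ℝ) : ℂ) * ((π:ℝ):ℂ) * Complex.I = ((5/12 * π : ℝ):ℂ) * Complex.I by push_cast; ring,
    show ((11/12 : ℝ) : ℂ) * ((π:ℝ):ℂ) * Complex.I = ((11/12 * π : ℝ):ℂ) * Complex.I by push_cast; ring]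
  have hs2 : (0:ℝ) < Real.sqrt 2 := Real.sqrt_pos.mpr (by norm_num)
  have hs2sq : Real.sqrt 2 ^ 2 = 2 := Real.sq_sqrt (by norm_num)
  have hs2' : (1:ℝ) < Real.sqrt 2 := by nlinarith
  have hs3sq : Real.sqrt 3 ^ 2 = 3 := Real.sq_sqrt (by norm_num)
  have hr0 : (0:ℝ) < 1 / Real.sqrt 2 := by positivity
  have hr1 : (1:ℝ) / Real.sqrt 2 < 1 := by rw [div_lt_one hs2]; exact hs2'
  have hre1 := re_pos_aux (1 / Real.sqrt 2) ((5 / 12 : ℝ) * π) hr0 hr1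
  have hre2 := re_pos_aux (1 / Real.sqrt 2) ((11 / 12 : ℝ) * π) hr0 hr1
  set z₁ : ℂ := 1 + ((1 / Real.sqrt 2 : ℝ):ℂ) * Complex.exp (((5 / 12 : ℝ) * π : ℝ) * Complex.I) with hz1
  set z₂ : ℂ := 1 + ((1 / Real.sqrt 2 : ℝ):ℂ) * Complex.exp (((11 / 12 : ℝ) * π : ℝ) * Complex.I) with hz2
  have hz1ne : z₁ ≠ 0 := fun h => by rw [h] at hre1; simp at hre1
  have hz2ne : z₂ ≠ 0 := fun h => by rw [h] at hre2; simp at hre2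
  have ha1 : |z₁.arg| < π / 2 := Complex.abs_arg_lt_pi_div_two_iff.mpr (Or.inl hre1)
  have ha2 : |z₂.arg| < π / 2 := Complex.abs_arg_lt_pi_div_two_iff.mpr (Or.inl hre2)
  rw [abs_lt] at ha1 ha2
  have hmul : (z₁ * z₂).arg = z₁.arg + z₂.arg :=
    Complex.arg_mul hz1ne hz2ne ⟨by linarith [ha1.1, ha2.1], by linarith [ha1.2, ha2.2]⟩
  rw [← hmul]
  have hI : (Complex.I)^2 = -1 := Complex.I_sq
  have h2c : ((Real.sqrt 2 : ℝ):ℂ) ^ 2 = 2 := by rw [← Complex.ofReal_pow, hs2sq]; norm_num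
  have h3c : ((Real.sqrt 3 : ℝ):ℂ) ^ 2 = 3 := by rw [← Complex.ofReal_pow, hs3sq]; norm_num
  have h2ne : ((Real.sqrt 2 : ℝ):ℂ) ≠ 0 := by
    simp only [ne_eq, Complex.ofReal_eq_zero]; exact ne_of_gt hs2
  have c23 : Real.cos (2/3 * π) = -(1/2) := by
    rw [show (2/3 : ℝ) * π = π - π/3 by ring, Real.cos_pi_sub, Real.cos_pi_div_three]
  have s23 : Real.sin (2/3 * π) = Real.sqrt 3 / 2 := by
    rw [show (2/3 : ℝ) * π = π - π/3 by ring, Real.sin_pi_sub, Real.sin_pi_div_three]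
  have c4 : Real.cos (1/4 * π) = Real.sqrt 2 / 2 := by
    rw [show (1/4 : ℝ) * π = π/4 by ring, Real.cos_pi_div_four]
  have s4 : Real.sin (1/4 * π) = Real.sqrt 2 / 2 := by
    rw [show (1/4 : ℝ) * π = π/4 by ring, Real.sin_pi_div_four]
  have cm4 : Real.cos (-(1/4) * π) = Real.sqrt 2 / 2 := by
    rw [show (-(1/4) : ℝ) * π = -(π/4) by ring, Real.cos_neg, Real.cos_pi_div_four]
  have sm4 : Real.sin (-(1/4) * π) = -(Real.sqrt 2 / 2) := by
    rw [show (-(1/4) : ℝ) * π = -(π/4) by ring, Real.sin_neg, Real.sin_pi_div_four]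
  have e1 : Complex.exp (((5 / 12 : ℝ) * π : ℝ) * Complex.I)
      = Complex.exp (((2/3 * π : ℝ)) * Complex.I) * Complex.exp (((-(1/4) * π : ℝ)) * Complex.I) := by
    rw [← Complex.exp_add]; congr 1; push_cast; ring
  have e2 : Complex.exp (((11 / 12 : ℝ) * π : ℝ) * Complex.I)
      = Complex.exp (((2/3 * π : ℝ)) * Complex.I) * Complex.exp (((1/4 * π : ℝ)) * Complex.I) := by
    rw [← Complex.exp_add]; congr 1; push_cast; ring
  have k1 : ((1 / Real.sqrt 2 : ℝ):ℂ) * Complex.exp (((-(1/4) * π : ℝ)) * Complex.I)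
      = (1 - Complex.I)/2 := by
    rw [expand_exp, cm4, sm4]
    push_cast
    field_simp
    ring_nf
  have k2 : ((1 / Real.sqrt 2 : ℝ):ℂ) * Complex.exp (((1/4 * π : ℝ)) * Complex.I)
      = (1 + Complex.I)/2 := by
    rw [expand_exp, c4, s4]
    push_cast
    field_simp
  have kw : Complex.exp (((2/3 * π : ℝ)) * Complex.I)
      = (-1 + ((Real.sqrt 3:ℝ):ℂ) * Complex.I)/2 := by
    rw [expand_exp, c23, s23]
    push_cast
    ring
  have hprod : z₁ * z₂ = ((1/2 : ℝ) : ℂ) * (↑(Real.cos (π/3)) + ↑(Real.sin (π/3)) * Complex.I) := by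
    rw [hz1, hz2, e1, e2,
      show ∀ w u v : ℂ, (1 + ((1 / Real.sqrt 2 : ℝ):ℂ) * (w * u)) * (1 + ((1 / Real.sqrt 2 : ℝ):ℂ) * (w * v))
        = (1 + w * (((1 / Real.sqrt 2 : ℝ):ℂ) * u)) * (1 + w * (((1 / Real.sqrt 2 : ℝ):ℂ) * v))
        from fun w u v => by ring,
      k1, k2, kw, Real.cos_pi_div_three, Real.sin_pi_div_three]
    push_cast
    linear_combination (-(1:ℂ)/8) * h3c + (((Real.sqrt 3:ℝ):ℂ)^2/8) * hI +
      ((-1/16 : ℂ) + ((Real.sqrt 3:ℝ):ℂ) * Complex.I/8 - ((Real.sqrt 3:ℝ):ℂ)^2*Complex.I^2/16) * hI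
  rw [hprod, Complex.arg_real_mul _ (by norm_num : (0:ℝ) < 1/2), Complex.ofReal_cos,
    Complex.ofReal_sin,
    Complex.arg_cos_add_sin_mul_I ⟨by linarith [Real.pi_pos], by linarith [Real.pi_pos]⟩]

theorem sqrt_three_pi_formula :
    Real.sqrt 3 * π = 3 * Real.sqrt 3 *
      ((∑' k : ℕ, (1 / 2 ^ 12 : ℝ) ^ k *
          ∑ j ∈ Finset.Icc (1:ℕ) 24,
            ((1 / Real.sqrt 2) ^ j * (-1 : ℝ) ^ (j + 1) * Real.sin (2 * π * j * 5 / 24)) /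
              (24 * k + j)) +
       (∑' k : ℕ, (1 / 2 ^ 12 : ℝ) ^ k *
          ∑ j ∈ Finset.Icc (1:ℕ) 24,
            ((1 / Real.sqrt 2) ^ j * (-1 : ℝ) ^ (j + 1) * Real.sin (2 * π * j * 11 / 24)) /
              (24 * k + j))) ∧
    Complex.arg (1 + (1 / Real.sqrt 2 : ℝ) * Complex.exp (((5 / 12 : ℝ) * π) * Complex.I)) +
      Complex.arg (1 + (1 / Real.sqrt 2 : ℝ) * Complex.exp (((11 / 12 : ℝ) * π) * Complex.I))
        = π / 3 := by
  refine ⟨?_, arg_part⟩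
  have b5 := (bbp_eq 5).tsum_eq
  have b11 := (bbp_eq 11).tsum_eq
  norm_num at b5 b11 ⊢
  rw [b5, b11]
  have h := arg_part
  norm_num at h
  rw [h]
  ring
end

section
/- √3·π = (9/2^{12}) · Σ_{k=0}^∞ (1/2^{12})^k Σ_{j=1}^{24} a_j/(24k + j), where (a_1,…,a_24) = (2^{11}, 0, 0, 2^{10}, 2^9, 0, 2^8, 2^8, 0, 0, 2^6, 0, −2^5, 0, 0, −2^4, −2^3, 0, −2^2, −2^2, 0, 0, −1, 0). -/
open Real

namespace SqrtThreePiBBP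

open MeasureTheory

noncomputable def PP : ℝ → ℝ := fun x => 2^11 + 2^10*x^3 + 2^9*x^4 + 2^8*x^6 + 2^8*x^7
  + 2^6*x^10 - 2^5*x^12 - 2^4*x^15 - 2^3*x^16 - 2^2*x^18 - 2^2*x^19 - x^22

lemma PP_cont : Continuous PP := by unfold PP; fun_prop

lemma PP_bound {x : ℝ} (h0 : 0 ≤ x) (h1 : x ≤ 1) : |PP x| ≤ 4160 := by
  have hb : ∀ n : ℕ, x^n ≤ 1 := fun n => pow_le_one₀ h0 h1
  have hb' : ∀ n : ℕ, 0 ≤ x^n := fun n => pow_nonneg h0 n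
  have e3 := hb 3; have e4 := hb 4; have e6 := hb 6; have e7 := hb 7; have e10 := hb 10
  have f12 := hb' 12; have f15 := hb' 15; have f16 := hb' 16; have f18 := hb' 18
  have f19 := hb' 19; have f22 := hb' 22
  have g3 := hb' 3; have g4 := hb' 4; have g6 := hb' 6; have g7 := hb' 7; have g10 := hb' 10
  have e12 := hb 12; have e15 := hb 15; have e16 := hb 16; have e18 := hb 18
  have e19 := hb 19; have e22 := hb 22
  rw [abs_le]; unfold PP
  constructor <;> nlinarith

lemma denom_pos (x : ℝ) : 0 < x^8 - 4*x^4 + 16 := by nlinarith [sq_nonneg (x^4-2)]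

lemma int_mono (c : ℝ) (n : ℕ) : ∫ x in (0:ℝ)..1, c * x^n = c/(n+1) := by
  rw [intervalIntegral.integral_const_mul, integral_pow]; norm_num
  rw [div_eq_mul_inv]

lemma hIcn (c : ℝ) (n : ℕ) : IntervalIntegrable (fun x:ℝ => c * x^n) volume 0 1 :=
  ((continuous_const.mul (continuous_pow n)).intervalIntegrable _ _)

lemma step1 (k : ℕ) : ∫ x in (0:ℝ)..1, (x^24/4096)^k * PP x
    = (1/2^12:ℝ)^k *
        (2 ^ 11 / (24 * k + 1) + 2 ^ 10 / (24 * k + 4) + 2 ^ 9 / (24 * k + 5)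
          + 2 ^ 8 / (24 * k + 7) + 2 ^ 8 / (24 * k + 8) + 2 ^ 6 / (24 * k + 11)
          - 2 ^ 5 / (24 * k + 13) - 2 ^ 4 / (24 * k + 16) - 2 ^ 3 / (24 * k + 17)
          - 2 ^ 2 / (24 * k + 19) - 2 ^ 2 / (24 * k + 20) - 1 / (24 * k + 23)) := by
  have e : ∀ x:ℝ, (x^24/4096)^k * PP x = (1/2^12:ℝ)^k *
      (2^11 * x^(24*k) + 2^10 * x^(24*k+3) + 2^9 * x^(24*k+4) + 2^8 * x^(24*k+6)
        + 2^8 * x^(24*k+7) + 2^6 * x^(24*k+10) - 2^5 * x^(24*k+12) - 2^4 * x^(24*k+15)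
        - 2^3 * x^(24*k+16) - 2^2 * x^(24*k+18) - 2^2 * x^(24*k+19) - 1 * x^(24*k+22)) := by
    intro x
    unfold PP
    rw [div_pow]
    rw [show ((4096:ℝ))^k = (2^12:ℝ)^k by norm_num]
    field_simp
    rw [← mul_pow, mul_one_div_cancel (by norm_num), one_pow]
    ring
  simp only [e]
  rw [intervalIntegral.integral_const_mul]
  have h1 := hIcn (2^11 : ℝ) (24*k)
  have h2 := hIcn (2^10 : ℝ) (24*k+3)
  have h3 := hIcn (2^9 : ℝ) (24*k+4)
  have h4 := hIcn (2^8 : ℝ) (24*k+6)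
  have h5 := hIcn (2^8 : ℝ) (24*k+7)
  have h6 := hIcn (2^6 : ℝ) (24*k+10)
  have h7 := hIcn (2^5 : ℝ) (24*k+12)
  have h8 := hIcn (2^4 : ℝ) (24*k+15)
  have h9 := hIcn (2^3 : ℝ) (24*k+16)
  have h10 := hIcn (2^2 : ℝ) (24*k+18)
  have h11 := hIcn (2^2 : ℝ) (24*k+19)
  have h12 := hIcn (1 : ℝ) (24*k+22)
  have s2 := h1.add h2
  have s3 := s2.add h3
  have s4 := s3.add h4
  have s5 := s4.add h5
  have s6 := s5.add h6
  have s7 := s6.sub h7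
  have s8 := s7.sub h8
  have s9 := s8.sub h9
  have s10 := s9.sub h10
  have s11 := s10.sub h11
  rw [intervalIntegral.integral_sub s11 h12, intervalIntegral.integral_sub s10 h11,
      intervalIntegral.integral_sub s9 h10, intervalIntegral.integral_sub s8 h9,
      intervalIntegral.integral_sub s7 h8, intervalIntegral.integral_sub s6 h7,
      intervalIntegral.integral_add s5 h6, intervalIntegral.integral_add s4 h5,
      intervalIntegral.integral_add s3 h4, intervalIntegral.integral_add s2 h3,
      intervalIntegral.integral_add h1 h2]
  simp only [int_mono]
  push_cast
  ring

lemma step2 : ∑' k:ℕ, ∫ x in (0:ℝ)..1, (x^24/4096)^k * PP x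
    = ∫ x in (0:ℝ)..1, 2^12*(x^6+4*x^3+8)/(x^8-4*x^4+16) := by
  have h01 : (0:ℝ) ≤ 1 := by norm_num
  simp only [intervalIntegral.integral_of_le h01]
  have hint : ∀ k : ℕ, IntegrableOn (fun x : ℝ => (x^24/4096)^k * PP x)
      (Set.Ioc (0:ℝ) 1) volume := fun k =>
    Continuous.integrableOn_Ioc (by exact ((continuous_pow 24).div_const _ |>.pow k).mul PP_cont)
  have hbd : ∀ k : ℕ, ∀ x ∈ Set.Ioc (0:ℝ) 1,
      ‖(x^24/4096)^k * PP x‖ ≤ (1/4096:ℝ)^k * 4160 := by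
    intro k x hx
    rw [norm_mul]
    have hx0 : 0 ≤ x := le_of_lt hx.1
    have hr0 : (0:ℝ) ≤ x^24/4096 := by positivity
    have hr1 : x^24/4096 ≤ 1/4096 := by
      have : x^24 ≤ 1 := pow_le_one₀ hx0 hx.2
      linarith
    have h1 : ‖(x^24/4096)^k‖ ≤ (1/4096:ℝ)^k := by
      rw [norm_pow, Real.norm_of_nonneg hr0]
      exact pow_le_pow_left₀ hr0 hr1 k
    have h2 : ‖PP x‖ ≤ 4160 := by rw [Real.norm_eq_abs]; exact PP_bound hx0 hx.2
    exact mul_le_mul h1 h2 (norm_nonneg _) (by positivity)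
  have hsum : Summable fun k : ℕ => ∫ x in Set.Ioc (0:ℝ) 1, ‖(x^24/4096)^k * PP x‖ := by
    apply Summable.of_nonneg_of_le (fun k => integral_nonneg (fun x => norm_nonneg _)) _
      ((summable_geometric_of_lt_one (by norm_num : (0:ℝ) ≤ 1/4096) (by norm_num)).mul_right 4160)
    intro k
    calc ∫ x in Set.Ioc (0:ℝ) 1, ‖(x^24/4096)^k * PP x‖
        ≤ ∫ _x in Set.Ioc (0:ℝ) 1, (1/4096:ℝ)^k * 4160 := by
          apply setIntegral_mono_on (hint k).norm (integrableOn_const (by simp))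
            measurableSet_Ioc (hbd k)
      _ = (1/4096:ℝ)^k * 4160 := by simp
  rw [MeasureTheory.integral_tsum_of_summable_integral_norm hint hsum]
  apply setIntegral_congr_fun measurableSet_Ioc
  intro x hx
  show ∑' k : ℕ, (x ^ 24 / 4096) ^ k * PP x
      = 2 ^ 12 * (x ^ 6 + 4 * x ^ 3 + 8) / (x ^ 8 - 4 * x ^ 4 + 16)
  have hx0 : 0 ≤ x := le_of_lt hx.1
  have hr0 : (0:ℝ) ≤ x^24/4096 := by positivity
  have hr1 : x^24/4096 < 1 := by
    have : x^24 ≤ 1 := pow_le_one₀ hx0 hx.2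
    linarith
  have hg : ∑' k : ℕ, (x^24/4096)^k * PP x = (1 - x^24/4096)⁻¹ * PP x := by
    rw [tsum_mul_right, tsum_geometric_of_lt_one hr0 hr1]
  rw [hg]
  have hd1 : (0:ℝ) < 1 - x^24/4096 := by linarith
  have hd2 := denom_pos x
  rw [eq_div_iff (ne_of_gt hd2), inv_mul_eq_div, div_mul_eq_mul_div, div_eq_iff (ne_of_gt hd1)]
  unfold PP
  ring

noncomputable def FF : ℝ → ℝ := fun x =>
  (2^11/Real.sqrt 3) * (Real.arctan ((x^4-2)/(2*Real.sqrt 3))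
    - Real.arctan ((Real.sqrt 3-1)*x/(x^2-2)) - Real.arctan ((Real.sqrt 3+1)*x/(x^2-2)))

lemma FF_deriv {x : ℝ} (hx2 : x^2 - 2 ≠ 0) :
    HasDerivAt FF (2^12*(x^6+4*x^3+8)/(x^8-4*x^4+16)) x := by
  have hs : Real.sqrt 3 ^ 2 = 3 := Real.sq_sqrt (by norm_num)
  have hs0 : (0:ℝ) < Real.sqrt 3 := Real.sqrt_pos.2 (by norm_num)
  unfold FF
  set s := Real.sqrt 3 with hsdef
  have hsne : s ≠ 0 := ne_of_gt hs0
  have hD8 : (0:ℝ) < x^8-4*x^4+16 := denom_pos x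
  have hDm : (0:ℝ) < x^4-2*s*x^2+4 := by nlinarith [sq_nonneg (x^2-s)]
  have hDp : (0:ℝ) < x^4+2*s*x^2+4 := by nlinarith [sq_nonneg (x^2+s)]
  have h1 : HasDerivAt (fun y : ℝ => (y^4-2)/(2*s)) (4*x^3/(2*s)) x := by
    simpa using ((hasDerivAt_pow 4 x).sub_const 2).div_const (2*s)
  have hb : HasDerivAt (fun y : ℝ => y^2-2) (2*x) x := by
    simpa using (hasDerivAt_pow 2 x).sub_const 2
  have h2 : HasDerivAt (fun y : ℝ => (s-1)*y/(y^2-2))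
      (((s-1)*(x^2-2) - (s-1)*x*(2*x))/(x^2-2)^2) x := by
    have ha : HasDerivAt (fun y : ℝ => (s-1)*y) (s-1) x := by
      simpa using (hasDerivAt_id x).const_mul (s-1)
    exact ha.div hb hx2
  have h3 : HasDerivAt (fun y : ℝ => (s+1)*y/(y^2-2))
      (((s+1)*(x^2-2) - (s+1)*x*(2*x))/(x^2-2)^2) x := by
    have ha : HasDerivAt (fun y : ℝ => (s+1)*y) (s+1) x := by
      simpa using (hasDerivAt_id x).const_mul (s+1)
    exact ha.div hb hx2
  have H := ((h1.arctan.sub h2.arctan).sub h3.arctan).const_mul ((2:ℝ)^11/s)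
  convert H using 1
  · rfl
  · rfl
  · rfl
  have e1 : 1+((x^4-2)/(2*s))^2 = (x^8-4*x^4+16)/(2*s)^2 := by
    field_simp
    linear_combination (4:ℝ)*hs
  have e2 : 1+((s-1)*x/(x^2-2))^2 = (x^4-2*s*x^2+4)/(x^2-2)^2 := by
    field_simp
    linear_combination (x:ℝ)^2*hs
  have e3 : 1+((s+1)*x/(x^2-2))^2 = (x^4+2*s*x^2+4)/(x^2-2)^2 := by
    field_simp
    linear_combination (x:ℝ)^2*hs
  rw [e1, e2, e3]
  rw [div_eq_iff (ne_of_gt hD8)]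
  have hA : x^4*(x^4-4)+16 ≠ 0 := by nlinarith [sq_nonneg (x^4-2)]
  have hB : x^2*(x^2-2*s)+4 ≠ 0 := by nlinarith
  have hC : x^2*(x^2+2*s)+4 ≠ 0 := by nlinarith
  field_simp
  linear_combination (-64*x^4*s - 8*x^10*s) * hs

lemma step3 : ∫ x in (0:ℝ)..1, 2^12*(x^6+4*x^3+8)/(x^8-4*x^4+16) = FF 1 - FF 0 := by
  apply intervalIntegral.integral_eq_sub_of_hasDerivAt
  · intro x hx
    rw [Set.uIcc_of_le (by norm_num : (0:ℝ) ≤ 1)] at hx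
    have hx2 : x^2 - 2 ≠ 0 := by nlinarith [hx.1, hx.2]
    exact FF_deriv hx2
  · apply Continuous.intervalIntegrable
    apply Continuous.div (by fun_prop) (by fun_prop)
    intro x; exact ne_of_gt (denom_pos x)

lemma step4 : FF 1 - FF 0 = 2^12*π/(3*Real.sqrt 3) := by
  have hs : Real.sqrt 3 ^ 2 = 3 := Real.sq_sqrt (by norm_num)
  have hs0 : (0:ℝ) < Real.sqrt 3 := Real.sqrt_pos.2 (by norm_num)
  unfold FF
  set s := Real.sqrt 3 with hsdef
  have hsne : s ≠ 0 := ne_of_gt hs0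
  have hs1 : 1 < s := by nlinarith
  have e1 : ((1:ℝ)^4-2)/(2*s) = -(2*s)⁻¹ := by
    rw [show ((1:ℝ)^4-2) = -1 by norm_num, neg_div, one_div]
  have e2 : (s-1)*1/((1:ℝ)^2-2) = -(s-1) := by
    rw [show ((1:ℝ)^2-2) = -1 by norm_num, mul_one, div_neg, div_one]
  have e3 : (s+1)*1/((1:ℝ)^2-2) = -(s+1) := by
    rw [show ((1:ℝ)^2-2) = -1 by norm_num, mul_one, div_neg, div_one]
  have e4 : ((0:ℝ)^4-2)/(2*s) = -s⁻¹ := by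
    rw [show ((0:ℝ)^4-2) = -2 by norm_num]
    field_simp
  have e5 : ∀ c : ℝ, c*0/((0:ℝ)^2-2) = 0 := by intro c; norm_num
  rw [e1, e2, e3, e4, e5, e5, arctan_zero, arctan_neg, arctan_neg, arctan_neg, arctan_neg]
  have harc : arctan (s-1) + arctan (s+1) = π - arctan (2*s) := by
    have h1 : 1 < (s-1)*(s+1) := by nlinarith
    have h2 : 0 < s-1 := by linarith
    have h := Real.arctan_add_eq_add_pi h1 h2
    rw [show (s-1+(s+1))/(1-(s-1)*(s+1)) = -(2*s) by
      rw [show (1:ℝ)-(s-1)*(s+1) = -1 by linear_combination -hs]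
      ring_nf, arctan_neg] at h
    linarith
  have hinv1 : arctan (2*s)⁻¹ = π/2 - arctan (2*s) := arctan_inv_of_pos (by positivity)
  have hinv2 : arctan s⁻¹ = π/2 - arctan s := arctan_inv_of_pos hs0
  have harcs : arctan s = π/3 := by
    rw [hsdef, ← Real.tan_pi_div_three]
    exact Real.arctan_tan (by linarith [Real.pi_pos]) (by linarith [Real.pi_pos])
  rw [hinv1, hinv2, harcs]
  have key : -(π/2 - arctan (2*s)) - -arctan (s-1) - -arctan (s+1) - (-(π/2 - π/3) - 0 - 0)
      = 2*π/3 := by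
    rw [show -(π/2 - arctan (2*s)) - -arctan (s-1) - -arctan (s+1) - (-(π/2 - π/3) - 0 - 0)
        = (arctan (s-1) + arctan (s+1)) + arctan (2*s) - π/2 + (π/2 - π/3) by ring, harc]
    ring
  rw [← mul_sub, key]
  field_simp

end SqrtThreePiBBP

theorem sqrt_three_pi_bbp :
    Real.sqrt 3 * π = (9 / 2 ^ 12) *
      ∑' k : ℕ, (1 / 2 ^ 12 : ℝ) ^ k *
        (2 ^ 11 / (24 * k + 1) + 2 ^ 10 / (24 * k + 4) + 2 ^ 9 / (24 * k + 5)
          + 2 ^ 8 / (24 * k + 7) + 2 ^ 8 / (24 * k + 8) + 2 ^ 6 / (24 * k + 11)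
          - 2 ^ 5 / (24 * k + 13) - 2 ^ 4 / (24 * k + 16) - 2 ^ 3 / (24 * k + 17)
          - 2 ^ 2 / (24 * k + 19) - 2 ^ 2 / (24 * k + 20) - 1 / (24 * k + 23)) := by
  have hT : ∑' k : ℕ, (1 / 2 ^ 12 : ℝ) ^ k *
        (2 ^ 11 / (24 * k + 1) + 2 ^ 10 / (24 * k + 4) + 2 ^ 9 / (24 * k + 5)
          + 2 ^ 8 / (24 * k + 7) + 2 ^ 8 / (24 * k + 8) + 2 ^ 6 / (24 * k + 11)
          - 2 ^ 5 / (24 * k + 13) - 2 ^ 4 / (24 * k + 16) - 2 ^ 3 / (24 * k + 17)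
          - 2 ^ 2 / (24 * k + 19) - 2 ^ 2 / (24 * k + 20) - 1 / (24 * k + 23))
      = 2^12*π/(3*Real.sqrt 3) := by
    rw [← SqrtThreePiBBP.step4, ← SqrtThreePiBBP.step3, ← SqrtThreePiBBP.step2]
    exact tsum_congr fun k => (SqrtThreePiBBP.step1 k).symm
  rw [hT]
  have hs : Real.sqrt 3 ^ 2 = 3 := Real.sq_sqrt (by norm_num)
  have hs0 : (0:ℝ) < Real.sqrt 3 := Real.sqrt_pos.2 (by norm_num)
  have hsne : Real.sqrt 3 ≠ 0 := ne_of_gt hs0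
  field_simp
  linear_combination 3*hs
end

section
/- Adegoke's null formula: 0 = Σ_{k=0}^∞ (1/729)^k · [ 243/(12k+1) − 243/(12k+2) − 324/(12k+3) − 81/(12k+4) + 27/(12k+5) − 9/(12k+7) + 9/(12k+8) + 12/(12k+9) + 3/(12k+10) − 1/(12k+11) ]. -/
open Real

namespace AdegokeAux

open MeasureTheory intervalIntegral

noncomputable def bbpP (y : ℝ) : ℝ :=
  243 - 243*y - 324*y^2 - 81*y^3 + 27*y^4 - 9*y^6 + 9*y^7 + 12*y^8 + 3*y^9 - y^10

noncomputable def bbpG (k : ℕ) (y : ℝ) : ℝ := (y^12/729)^k * bbpP y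

noncomputable def bbpH (y : ℝ) : ℝ := 1458/(3+y^2) - 729/(y^2-3*y+3)

noncomputable def bbpF (y : ℝ) : ℝ :=
  486*Real.sqrt 3*Real.arctan (y/Real.sqrt 3)
    - 486*Real.sqrt 3*Real.arctan ((2*y-3)/Real.sqrt 3)

noncomputable def bbpC (j : ℕ) : ℝ :=
  [243,-243,-324,-81,27,0,-9,9,12,3,-1,0].getD j 0

lemma bbp_deriv (x : ℝ) : HasDerivAt bbpF (bbpH x) x := by
  set s := Real.sqrt 3 with hs
  have hs0 : s ≠ 0 := by positivity
  have h33 : s * s = 3 := Real.mul_self_sqrt (by norm_num)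
  have dA : HasDerivAt (fun y : ℝ => y / s) (1 / s) x := by
    simpa using (hasDerivAt_id x).div_const s
  have dB : HasDerivAt (fun y : ℝ => (2*y-3) / s) (2 / s) x := by
    have h : HasDerivAt (fun y : ℝ => 2*y-3) 2 x := by
      simpa using ((hasDerivAt_id x).const_mul 2).sub_const 3
    simpa using h.div_const s
  have full := ((dA.arctan.const_mul (486*s)).sub (dB.arctan.const_mul (486*s)))
  have e1 : (x/s)^2 = x^2/3 := by
    rw [div_pow, hs, Real.sq_sqrt (by norm_num : (3:ℝ) ≥ 0)]
  have e2 : ((2*x-3)/s)^2 = (2*x-3)^2/3 := by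
    rw [div_pow, hs, Real.sq_sqrt (by norm_num : (3:ℝ) ≥ 0)]
  refine full.congr_deriv ?_
  rw [e1, e2, bbpH]
  have d1 : (3:ℝ) + x^2 > 0 := by positivity
  have d2 : x^2 - 3*x + 3 > 0 := by nlinarith [sq_nonneg (2*x-3)]
  have d3 : (1:ℝ) + x^2/3 > 0 := by positivity
  have d4 : (1:ℝ) + (2*x-3)^2/3 > 0 := by positivity
  have d2' : x*(x-3)+3 ≠ 0 := by nlinarith
  field_simp
  ring

lemma bbp_H_integral : ∫ y in (0:ℝ)..1, bbpH y = 0 := by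
  have hcont : Continuous bbpH := by
    apply Continuous.sub
    · exact continuous_const.div (by continuity) (fun x => by positivity)
    · exact continuous_const.div (by continuity)
        (fun x => by nlinarith [sq_nonneg (2*x-3)])
  rw [intervalIntegral.integral_eq_sub_of_hasDerivAt
    (fun x _ => bbp_deriv x) (hcont.intervalIntegrable 0 1)]
  set s := Real.sqrt 3 with hs
  have hs0 : s ≠ 0 := by positivity
  have h33 : s * s = 3 := Real.mul_self_sqrt (by norm_num)
  have a1 : Real.arctan (1/s) = π/6 := by
    rw [hs, ← Real.tan_pi_div_six, Real.arctan_tan] <;> linarith [Real.pi_pos]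
  have a2 : Real.arctan s = π/3 := by
    rw [hs, ← Real.tan_pi_div_three, Real.arctan_tan] <;> linarith [Real.pi_pos]
  have e1 : (2*(1:ℝ)-3)/s = -(1/s) := by ring
  have e0 : (2*(0:ℝ)-3)/s = -s := by
    rw [div_eq_iff hs0]; linear_combination h33
  simp only [bbpF, e1, e0, Real.arctan_neg, a1, a2]
  norm_num [Real.arctan_zero]
  have a1' : Real.arctan (-1 / √3) = -(π/6) := by
    rw [neg_div, Real.arctan_neg, ← hs, a1]
  have a2' : Real.arctan (-3 / √3) = -(π/3) := by
    have : 3 / √3 = s := by rw [← hs, div_eq_iff hs0, h33]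
    rw [neg_div, Real.arctan_neg, this, a2]
  rw [a1', a2']
  ring

lemma bbp_rep (k : ℕ) (y : ℝ) :
    bbpG k y = ∑ j ∈ Finset.range 12, bbpC j * (1/729:ℝ)^k * y^(12*k+j) := by
  simp only [Finset.sum_range_succ, Finset.sum_range_zero, bbpC, bbpG, bbpP, List.getD]
  norm_num
  simp only [pow_add, pow_mul, div_pow, one_div]
  simp only [inv_pow]
  ring

lemma bbp_term_integral (k : ℕ) :
    ∫ y in (0:ℝ)..1, bbpG k y = (1 / 729 : ℝ) ^ k *
      (243 / (12 * k + 1) - 243 / (12 * k + 2) - 324 / (12 * k + 3) - 81 / (12 * k + 4)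
        + 27 / (12 * k + 5) - 9 / (12 * k + 7) + 9 / (12 * k + 8) + 12 / (12 * k + 9)
        + 3 / (12 * k + 10) - 1 / (12 * k + 11)) := by
  have h1 : ∫ y in (0:ℝ)..1, bbpG k y
      = ∑ j ∈ Finset.range 12, ∫ y in (0:ℝ)..1, bbpC j * (1/729:ℝ)^k * y^(12*k+j) := by
    rw [intervalIntegral.integral_congr (g := fun y => ∑ j ∈ Finset.range 12,
        bbpC j * (1/729:ℝ)^k * y^(12*k+j)) (fun y _ => bbp_rep k y)]
    exact intervalIntegral.integral_finset_sum (fun j _ =>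
      ((continuous_const.mul (continuous_pow _)).intervalIntegrable 0 1))
  rw [h1]
  have h2 : ∀ j : ℕ, ∫ y in (0:ℝ)..1, bbpC j * (1/729:ℝ)^k * y^(12*k+j)
      = bbpC j * (1/729:ℝ)^k * (1/((12*k+j : ℕ)+1)) := by
    intro j
    rw [intervalIntegral.integral_const_mul, integral_pow]
    norm_num
  simp only [h2, Finset.sum_range_succ, Finset.sum_range_zero, bbpC, List.getD]
  push_cast
  norm_num
  ring

lemma bbpP_bound {y : ℝ} (h0 : 0 ≤ y) (h1 : y ≤ 1) : |bbpP y| ≤ 952 := by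
  have h : ∀ n : ℕ, 0 ≤ y^n ∧ y^n ≤ 1 := fun n => ⟨pow_nonneg h0 n, pow_le_one₀ h0 h1⟩
  obtain ⟨a2,b2⟩ := h 2; obtain ⟨a3,b3⟩ := h 3; obtain ⟨a4,b4⟩ := h 4
  obtain ⟨a6,b6⟩ := h 6; obtain ⟨a7,b7⟩ := h 7; obtain ⟨a8,b8⟩ := h 8
  obtain ⟨a9,b9⟩ := h 9; obtain ⟨a10,b10⟩ := h 10
  rw [bbpP, abs_le]
  constructor <;> linarith

lemma bbp_pointwise {y : ℝ} (hy0 : 0 < y) (hy1 : y ≤ 1) :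
    (∑' k : ℕ, bbpG k y) = bbpH y := by
  have hy0' := le_of_lt hy0
  have h12 : y^12 ≤ 1 := pow_le_one₀ hy0' hy1
  have hr0 : 0 ≤ y^12/729 := by positivity
  have hr1 : y^12/729 < 1 := by
    rw [div_lt_one (by norm_num)]; linarith
  have ht : ∑' k : ℕ, bbpG k y = (1 - y^12/729)⁻¹ * bbpP y := by
    simp only [bbpG]; rw [tsum_mul_right, tsum_geometric_of_lt_one hr0 hr1]
  rw [ht, bbpP, bbpH]
  have d1 : (3:ℝ)+y^2 > 0 := by positivity
  have d2 : y^2-3*y+3 > 0 := by nlinarith [sq_nonneg (2*y-3)]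
  have d3 : (1:ℝ) - y^12/729 > 0 := by linarith
  have d4 : (729:ℝ) - y^12 ≠ 0 := by linarith
  have d2' : y*(y-3)+3 ≠ 0 := by nlinarith
  field_simp
  ring

lemma bbp_cont (k : ℕ) : Continuous (bbpG k) := by
  unfold bbpG bbpP; fun_prop

lemma bbp_main : HasSum
    (fun k : ℕ => ∫ y in Set.Ioc (0:ℝ) 1, bbpG k y) 0 := by
  have hInt : ∀ k : ℕ, IntegrableOn (bbpG k) (Set.Ioc (0:ℝ) 1) :=
    fun k => (bbp_cont k).integrableOn_Ioc
  have hbound : ∀ k : ℕ, ∫ y in Set.Ioc (0:ℝ) 1, ‖bbpG k y‖ ≤ 952 * (1/729)^k := by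
    intro k
    have hpt : ∀ y ∈ Set.Ioc (0:ℝ) 1, ‖bbpG k y‖ ≤ 952*(1/729:ℝ)^k := by
      intro y hy
      obtain ⟨hy0, hy1⟩ := hy
      have hy0' := le_of_lt hy0
      have h12 : y^12 ≤ 1 := pow_le_one₀ hy0' hy1
      have hr : |y^12/729| ≤ 1/729 := by
        rw [abs_of_nonneg (by positivity)]
        rw [div_le_div_iff₀ (by norm_num) (by norm_num)]; linarith
      calc ‖bbpG k y‖ = |y^12/729|^k * |bbpP y| := by
            rw [bbpG, Real.norm_eq_abs, abs_mul, abs_pow]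
        _ ≤ (1/729)^k * 952 :=
            mul_le_mul (pow_le_pow_left₀ (abs_nonneg _) hr k)
              (bbpP_bound hy0' hy1) (abs_nonneg _) (by positivity)
        _ = 952*(1/729)^k := by ring
    calc ∫ y in Set.Ioc (0:ℝ) 1, ‖bbpG k y‖
        ≤ ∫ _ in Set.Ioc (0:ℝ) 1, 952*(1/729:ℝ)^k :=
          setIntegral_mono_on (hInt k).norm
            (integrableOn_const measure_Ioc_lt_top.ne) measurableSet_Ioc hpt
      _ = 952*(1/729)^k := by simp [Real.volume_Ioc]
  have hsum : Summable (fun k : ℕ => ∫ y in Set.Ioc (0:ℝ) 1, ‖bbpG k y‖) :=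
    Summable.of_nonneg_of_le (fun k => integral_nonneg (fun y => norm_nonneg _)) hbound
      ((summable_geometric_of_lt_one (by norm_num) (by norm_num)).mul_left 952)
  have key := hasSum_integral_of_summable_integral_norm
    (μ := MeasureTheory.volume.restrict (Set.Ioc (0:ℝ) 1)) (fun k => hInt k) hsum
  have htsum : ∫ y in Set.Ioc (0:ℝ) 1, (∑' k : ℕ, bbpG k y) = 0 := by
    rw [setIntegral_congr_fun (g := bbpH) measurableSet_Ioc
      (fun y hy => bbp_pointwise hy.1 hy.2)]
    rw [← intervalIntegral.integral_of_le zero_le_one]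
    exact bbp_H_integral
  rwa [htsum] at key

end AdegokeAux

theorem adegoke_null_formula :
    (0 : ℝ) = ∑' k : ℕ, (1 / 729 : ℝ) ^ k *
      (243 / (12 * k + 1) - 243 / (12 * k + 2) - 324 / (12 * k + 3) - 81 / (12 * k + 4)
        + 27 / (12 * k + 5) - 9 / (12 * k + 7) + 9 / (12 * k + 8) + 12 / (12 * k + 9)
        + 3 / (12 * k + 10) - 1 / (12 * k + 11)) := by
  have key := AdegokeAux.bbp_main
  have heq : (fun k : ℕ => ∫ y in Set.Ioc (0:ℝ) 1, AdegokeAux.bbpG k y)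
      = fun k : ℕ => (1 / 729 : ℝ) ^ k *
      (243 / (12 * k + 1) - 243 / (12 * k + 2) - 324 / (12 * k + 3) - 81 / (12 * k + 4)
        + 27 / (12 * k + 5) - 9 / (12 * k + 7) + 9 / (12 * k + 8) + 12 / (12 * k + 9)
        + 3 / (12 * k + 10) - 1 / (12 * k + 11)) := by
    funext k
    rw [← intervalIntegral.integral_of_le zero_le_one]
    exact AdegokeAux.bbp_term_integral k
  rw [heq] at key
  exact key.tsum_eq.symm
end

section
/- Let φ = (1+√5)/2. Then (1 + φ^{−1}e^{4πi/15}) · conj(1 + φ^{−1}e^{4πi/15})^{−1} = e^{πi/5}. -/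
open Real Complex

private lemma exp_add_exp' (a b : ℝ) :
    Complex.exp ((a : ℂ) * Complex.I) + Complex.exp ((b : ℂ) * Complex.I) =
      2 * (Real.cos ((a - b) / 2) : ℂ) *
        Complex.exp ((((a + b) / 2 : ℝ) : ℂ) * Complex.I) := by
  rw [Complex.exp_mul_I, Complex.exp_mul_I, Complex.exp_mul_I, Complex.ofReal_cos]
  push_cast
  linear_combination Complex.cos_add_cos (a:ℂ) (b:ℂ) + Complex.I * Complex.sin_add_sin (a:ℂ) (b:ℂ)
theorem golden_ratio_algebraic_identity (φ : ℝ) (hφ : φ = (1 + Real.sqrt 5) / 2) :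
    (1 + (φ⁻¹ : ℝ) * Complex.exp ((4 * π / 15 : ℝ) * Complex.I)) *
      ((starRingEnd ℂ) (1 + (φ⁻¹ : ℝ) * Complex.exp ((4 * π / 15 : ℝ) * Complex.I)))⁻¹ =
    Complex.exp ((π / 5 : ℝ) * Complex.I) := by
  have hs5 : Real.sqrt 5 ^ 2 = 5 := Real.sq_sqrt (by norm_num)
  have hs5pos : (0:ℝ) < Real.sqrt 5 := Real.sqrt_pos.mpr (by norm_num)
  -- cos (2π/5) = (√5 - 1)/4
  have hcos25 : Real.cos (2 * π / 5) = (Real.sqrt 5 - 1) / 4 := by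
    rw [show (2 * π / 5 : ℝ) = 2 * (π / 5) by ring, Real.cos_two_mul, Real.cos_pi_div_five]
    nlinarith [hs5]
  -- φ⁻¹ = 2 cos(2π/5)
  have hφinv : (φ⁻¹ : ℝ) = 2 * Real.cos (2 * π / 5) := by
    rw [hcos25, hφ]
    rw [eq_div_iff (by norm_num : (4:ℝ) ≠ 0)] at *
    field_simp
    nlinarith [hs5]
  -- φ⁻¹ * exp(4π/15 I) = exp(2π/3 I) + exp(-2π/15 I)
  have h1 : ((φ⁻¹ : ℝ) : ℂ) * Complex.exp ((4 * π / 15 : ℝ) * Complex.I) =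
      Complex.exp (((2 * π / 3 : ℝ) : ℂ) * Complex.I) +
        Complex.exp (((-(2 * π / 15) : ℝ) : ℂ) * Complex.I) := by
    have h := exp_add_exp' (2 * π / 3) (-(2 * π / 15))
    rw [show ((2 * π / 3 + -(2 * π / 15)) / 2 : ℝ) = 4 * π / 15 by ring,
      show ((2 * π / 3 - -(2 * π / 15)) / 2 : ℝ) = 2 * π / 5 by ring] at h
    rw [h, hφinv]
    push_cast
    ring
  -- 1 + exp(2π/3 I) = exp(π/3 I)
  have h2 : (1 : ℂ) + Complex.exp (((2 * π / 3 : ℝ) : ℂ) * Complex.I) =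
      Complex.exp (((π / 3 : ℝ) : ℂ) * Complex.I) := by
    rw [Complex.exp_mul_I, Complex.exp_mul_I,
      ← Complex.ofReal_cos, ← Complex.ofReal_sin, ← Complex.ofReal_cos, ← Complex.ofReal_sin,
      show (2 * π / 3 : ℝ) = π - π / 3 by ring, Real.cos_pi_sub, Real.sin_pi_sub,
      Real.cos_pi_div_three, Real.sin_pi_div_three]
    push_cast
    ring
  -- z = 2 cos(7π/30) exp(π/10 I)
  have h3 : (1 : ℂ) + ((φ⁻¹ : ℝ) : ℂ) * Complex.exp ((4 * π / 15 : ℝ) * Complex.I) =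
      2 * (Real.cos (7 * π / 30) : ℂ) * Complex.exp (((π / 10 : ℝ) : ℂ) * Complex.I) := by
    rw [h1, ← add_assoc, h2]
    have h := exp_add_exp' (π / 3) (-(2 * π / 15))
    rw [show ((π / 3 + -(2 * π / 15)) / 2 : ℝ) = π / 10 by ring,
      show ((π / 3 - -(2 * π / 15)) / 2 : ℝ) = 7 * π / 30 by ring] at h
    exact h
  rw [h3]
  have hcpos : (0:ℝ) < Real.cos (7 * π / 30) :=
    Real.cos_pos_of_mem_Ioo ⟨by nlinarith [Real.pi_pos], by nlinarith [Real.pi_pos]⟩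
  have hcne : ((Real.cos (7 * π / 30) : ℝ) : ℂ) ≠ 0 := by
    exact_mod_cast hcpos.ne'
  have hconj : (starRingEnd ℂ)
      (2 * (Real.cos (7 * π / 30) : ℂ) * Complex.exp (((π / 10 : ℝ) : ℂ) * Complex.I)) =
      2 * (Real.cos (7 * π / 30) : ℂ) * Complex.exp (((-(π / 10) : ℝ) : ℂ) * Complex.I) := by
    simp only [map_mul, Complex.conj_ofReal, Complex.conj_I, ← Complex.exp_conj, map_ofNat]
    congr 2
    push_cast
    ring
  have hexpneg : (Complex.exp (((-(π / 10) : ℝ) : ℂ) * Complex.I))⁻¹ =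
      Complex.exp (((π / 10 : ℝ) : ℂ) * Complex.I) := by
    rw [← Complex.exp_neg]
    congr 1
    push_cast
    ring
  have hee : Complex.exp (((π / 10 : ℝ) : ℂ) * Complex.I) *
      Complex.exp (((π / 10 : ℝ) : ℂ) * Complex.I) =
      Complex.exp (((π / 5 : ℝ) : ℂ) * Complex.I) := by
    rw [← Complex.exp_add]
    congr 1
    push_cast
    ring
  have h2ne : (2 * (Real.cos (7 * π / 30) : ℂ)) ≠ 0 :=
    mul_ne_zero two_ne_zero hcne
  rw [hconj, mul_inv, hexpneg,
    show 2 * (Real.cos (7 * π / 30) : ℂ) * Complex.exp (((π / 10 : ℝ) : ℂ) * Complex.I) *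
      ((2 * (Real.cos (7 * π / 30) : ℂ))⁻¹ *
        Complex.exp (((π / 10 : ℝ) : ℂ) * Complex.I)) =
      (2 * (Real.cos (7 * π / 30) : ℂ) * (2 * (Real.cos (7 * π / 30) : ℂ))⁻¹) *
        (Complex.exp (((π / 10 : ℝ) : ℂ) * Complex.I) *
          Complex.exp (((π / 10 : ℝ) : ℂ) * Complex.I)) from by ring,
    mul_inv_cancel₀ h2ne, one_mul, hee]
end

section
/- Let ψ = √3 + 1. Then arg(1 + ψ^{−1}·e^{(2/12)·2πi}) = π/12; equivalently π = 12 · Σ_{k=0}^∞ (1/ψ^{12})^k Σ_{j=1}^{12} [ ψ^{−j}(−1)^{j+1} sin(2πj·2/12) ] / (12k + j). -/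
open Real Complex

theorem pi_psi_bbp (ψ : ℝ) (hψ : ψ = Real.sqrt 3 + 1) :
    Complex.arg (1 + (ψ⁻¹ : ℝ) * Complex.exp (((2 / 12 : ℝ) * (2 * π)) * Complex.I)) = π / 12 ∧
    π = 12 * ∑' k : ℕ, (1 / ψ ^ 12 : ℝ) ^ k *
        ∑ j ∈ Finset.Icc (1:ℕ) 12,
          (ψ⁻¹ ^ j * (-1 : ℝ) ^ (j + 1) * Real.sin (2 * π * j * 2 / 12)) / (12 * k + j) := by
  have hs3 : Real.sqrt 3 ^ 2 = 3 := Real.sq_sqrt (by norm_num)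
  have hs3pos : (1:ℝ) < Real.sqrt 3 := by nlinarith [Real.sqrt_nonneg 3]
  set r : ℝ := ψ⁻¹ with hrdef
  have hψpos : (0:ℝ) < ψ := by rw [hψ]; linarith
  have hψgt1 : (1:ℝ) < ψ := by rw [hψ]; linarith
  have hr0 : 0 < r := by positivity
  have hr1 : r < 1 := by
    rw [hrdef]
    exact inv_lt_one_of_one_lt₀ hψgt1
  -- the angle is π/3
  have hθ : ((2 / 12 : ℝ) * (2 * π) : ℂ) = ((π/3 : ℝ) : ℂ) := by
    push_cast; ring
  rw [hθ]
  set z : ℂ := (r : ℝ) * Complex.exp (((π/3 : ℝ)) * Complex.I) with hzdef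
  -- real and imaginary parts of 1 + z
  have hre : (1 + z).re = 1 + r * Real.cos (π/3) := by
    rw [hzdef, Complex.add_re, Complex.one_re, Complex.re_ofReal_mul,
      Complex.exp_ofReal_mul_I_re]
  have him : (1 + z).im = r * Real.sin (π/3) := by
    rw [hzdef, Complex.add_im, Complex.one_im, Complex.im_ofReal_mul,
      Complex.exp_ofReal_mul_I_im, zero_add]
  rw [Real.cos_pi_div_three] at hre
  rw [Real.sin_pi_div_three] at him
  have hrepos : 0 < (1 + z).re := by rw [hre]; positivity
  -- Part 1: the argument computation
  have harg : Complex.arg (1 + z) = π / 12 := by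
    have hmem : Complex.arg (1 + z) ∈ Set.Ioo (-(π/2)) (π/2) := by
      have := Complex.abs_arg_lt_pi_div_two_iff.mpr (Or.inl hrepos)
      constructor
      · have := neg_abs_le (Complex.arg (1+z)); have := Complex.abs_arg_lt_pi_div_two_iff.mpr (Or.inl hrepos); linarith
      · linarith [le_abs_self (Complex.arg (1+z))]
    have hmem' : (π/12 : ℝ) ∈ Set.Ioo (-(π/2)) (π/2) := by
      constructor <;> nlinarith [Real.pi_pos]
    refine Real.injOn_tan hmem hmem' ?_
    rw [Complex.tan_arg, hre, him]
    have hs2 : Real.sqrt 2 ^ 2 = 2 := Real.sq_sqrt (by norm_num)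
    have hs2pos : (0:ℝ) < Real.sqrt 2 := Real.sqrt_pos.mpr (by norm_num)
    have hrval : r = (Real.sqrt 3 - 1)/2 := by
      rw [hrdef, hψ]
      rw [eq_div_iff (by norm_num : (2:ℝ) ≠ 0)]
      rw [inv_mul_eq_div, div_eq_iff (by linarith : Real.sqrt 3 + 1 ≠ 0)]
      nlinarith
    have lhs_eq : r * (Real.sqrt 3 / 2) / (1 + r * (1/2)) = 2 - Real.sqrt 3 := by
      have hden : (0:ℝ) < 1 + r * (1/2) := by positivity
      rw [div_eq_iff hden.ne', hrval]
      nlinarith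
    have rhs_eq : Real.tan (π/12) = 2 - Real.sqrt 3 := by
      have h12 : (π/12 : ℝ) = π/3 - π/4 := by ring
      rw [h12, Real.tan_eq_sin_div_cos, Real.sin_sub, Real.cos_sub,
        Real.sin_pi_div_three, Real.cos_pi_div_three, Real.sin_pi_div_four,
        Real.cos_pi_div_four]
      have hden : (0:ℝ) < 1/2 * (Real.sqrt 2/2) + Real.sqrt 3/2 * (Real.sqrt 2/2) := by
        positivity
      rw [div_eq_iff hden.ne']
      nlinarith [sq_nonneg (Real.sqrt 2 * Real.sqrt 3)]
    rw [lhs_eq, rhs_eq]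
  refine ⟨harg, ?_⟩
  -- Part 2: the series
  have hznorm : ‖z‖ < 1 := by
    rw [hzdef, norm_mul]
    simp only [Complex.norm_real, Real.norm_eq_abs, Complex.norm_exp_ofReal_mul_I, mul_one]
    rwa [abs_of_pos hr0]
  have H := Complex.hasSum_taylorSeries_log hznorm
  have Him := H.mapL Complex.imCLM
  simp only [Complex.imCLM_apply] at Him
  -- identify the imaginary part of each term
  have hterm : ∀ n : ℕ, ((-1) ^ (n+1) * z ^ n / n : ℂ).im
      = ((-1) ^ (n+1) * r ^ n / n) * Real.sin (n * (π/3)) := by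
    intro n
    have hzn : ((-1) ^ (n+1) * z ^ n / n : ℂ)
        = (((-1) ^ (n+1) * r ^ n / n : ℝ) : ℂ) * Complex.exp (((n * (π/3) : ℝ)) * Complex.I) := by
      rw [hzdef, mul_pow, ← Complex.exp_nat_mul]
      push_cast
      ring
    rw [hzn, Complex.im_ofReal_mul, Complex.exp_ofReal_mul_I_im]
  rw [funext hterm] at Him
  rw [Complex.log_im, harg] at Him
  -- regroup the sum in blocks of 12
  have Hg := (Nat.divModEquiv 12).symm.hasSum_iff.mpr Him
  have Hfib := Hg.prod_fiberwise (fun k => hasSum_fintype _)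
  simp only [Function.comp_def, Nat.divModEquiv_symm_apply] at Hfib
  -- rewrite each block
  have key : ∀ (k j : ℕ),
      ((-1) ^ (k * 12 + j + 1) * r ^ (k * 12 + j) / ((k * 12 + j : ℕ) : ℝ))
        * Real.sin (((k * 12 + j : ℕ) : ℝ) * (π/3))
      = (1 / ψ ^ 12 : ℝ) ^ k *
          ((ψ⁻¹ ^ j * (-1 : ℝ) ^ (j + 1) * Real.sin (2 * π * j * 2 / 12)) / (12 * k + j)) := by
    intro k j
    have hsin : Real.sin (((k * 12 + j : ℕ) : ℝ) * (π/3)) = Real.sin (2 * π * j * 2 / 12) := by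
      have : ((k * 12 + j : ℕ) : ℝ) * (π/3) = 2 * π * j * 2 / 12 + (2 * k : ℕ) * (2 * π) := by
        push_cast; ring
      rw [this, Real.sin_add_nat_mul_two_pi]
    have hpow : ((-1:ℝ)) ^ (k * 12 + j + 1) = (-1:ℝ) ^ (j + 1) := by
      rw [add_assoc, pow_add]
      rw [Even.neg_one_pow ⟨k * 6, by ring⟩, one_mul]
    have hrpow : r ^ (k * 12 + j) = (1 / ψ ^ 12 : ℝ) ^ k * ψ⁻¹ ^ j := by
      rw [hrdef, pow_add, pow_mul, one_div, ← inv_pow]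
      ring
    rw [hsin, hpow, hrpow]
    push_cast
    ring
  refine (Hfib.congr_fun fun k => ?_).tsum_eq ▸ by ring
  -- goal: statement summand k = block sum k
  rw [Fin.sum_univ_eq_sum_range (fun j =>
      ((-1) ^ (k * 12 + j + 1) * r ^ (k * 12 + j) / ((k * 12 + j : ℕ) : ℝ))
        * Real.sin (((k * 12 + j : ℕ) : ℝ) * (π/3))) 12]
  simp only [key]
  rw [← Finset.mul_sum]
  congr 1
  have hT0 : (ψ⁻¹ ^ (0:ℕ) * (-1 : ℝ) ^ ((0:ℕ) + 1)
      * Real.sin (2 * π * ((0:ℕ):ℝ) * 2 / 12)) / (12 * k + ((0:ℕ):ℝ)) = 0 := by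
    norm_num
  have hT12 : (ψ⁻¹ ^ (12:ℕ) * (-1 : ℝ) ^ ((12:ℕ) + 1)
      * Real.sin (2 * π * ((12:ℕ):ℝ) * 2 / 12)) / (12 * k + ((12:ℕ):ℝ)) = 0 := by
    have h4 : (2 * π * ((12:ℕ):ℝ) * 2 / 12) = (4:ℕ) * π := by push_cast; ring
    rw [h4, Real.sin_nat_mul_pi]
    simp
  rw [show (12:ℕ) = 13 - 1 from rfl, ← Finset.Ico_add_one_right_eq_Icc, Finset.sum_Ico_eq_sum_range]
  set T : ℕ → ℝ := fun j =>
    ψ⁻¹ ^ j * (-1 : ℝ) ^ (j + 1) * Real.sin (2 * π * (j:ℝ) * 2 / 12) / (12 * k + (j:ℝ)) with hT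
  show ∑ x ∈ Finset.range (13 - 1), T (1 + x) = ∑ x ∈ Finset.range 12, T x
  calc ∑ x ∈ Finset.range (13 - 1), T (1 + x)
      = ∑ x ∈ Finset.range 12, T (x + 1) := by
        refine Finset.sum_congr rfl fun x _ => ?_
        rw [add_comm]
    _ = ∑ x ∈ Finset.range 13, T x - T 0 := by rw [Finset.sum_range_succ' T 12]; ring
    _ = ∑ x ∈ Finset.range 12, T x + T 12 - T 0 := by rw [Finset.sum_range_succ]
    _ = ∑ x ∈ Finset.range 12, T x := by
        have hT0' : T 0 = 0 := by simp [hT]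
        have hT12' : T 12 = 0 := by
          simp only [hT]
          push_cast
          rw [show (2 * π * (12:ℝ) * 2 / 12) = ((4:ℕ):ℝ) * π by push_cast; ring,
            Real.sin_nat_mul_pi]
          simp
        rw [hT0', hT12']
        ring
end

section
/- Let ψ = √3 + 1. Then arg(1 + ψ^{−1}e^{(2/12)·2πi}) = arg(1 + ψ^{−1}e^{(5/12)·2πi}), i.e. the points 0, 1 + ψ^{−1}e^{πi/3}, and 1 + ψ^{−1}e^{5πi/6} are collinear. -/
open Real Complex

/-! With `r = ψ⁻¹ = (√3 - 1)/2`, expanding `e^{πi/3} = (1 + √3 i)/2` and `e^{5πi/6} = (-√3 + i)/2`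
shows `1 + r e^{πi/3} = √3 · (1 + r e^{5πi/6})`; a positive real factor does not change the argument. -/

lemma inv_sqrt_three_add_one : (√3 + 1)⁻¹ = (√3 - 1) / 2 := by
  have h : √3 ^ 2 = 3 := sq_sqrt (by norm_num)
  refine inv_eq_of_mul_eq_one_right ?_
  linear_combination h / 2

lemma exp_pi_div_three_mul_I : exp ((π / 3 : ℝ) * I) = 1 / 2 + (√3 / 2 : ℝ) * I := by
  rw [exp_mul_I, ← ofReal_cos, ← ofReal_sin, cos_pi_div_three, sin_pi_div_three]
  push_cast; ring

lemma exp_five_pi_div_six_mul_I : exp ((5 * π / 6 : ℝ) * I) = -(√3 / 2 : ℝ) + 1 / 2 * I := by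
  rw [exp_mul_I, ← ofReal_cos, ← ofReal_sin, show 5 * π / 6 = π - π / 6 by ring,
    Real.cos_pi_sub, Real.sin_pi_sub, cos_pi_div_six, sin_pi_div_six]
  push_cast; ring

lemma one_add_mul_exp_pi_div_three_eq_sqrt_three_mul :
    1 + ((√3 - 1) / 2 : ℝ) * exp ((π / 3 : ℝ) * I) =
      √3 * (1 + ((√3 - 1) / 2 : ℝ) * exp ((5 * π / 6 : ℝ) * I)) := by
  have h : (√3 : ℂ) ^ 2 = 3 := by rw [← ofReal_pow, sq_sqrt (by norm_num)]; norm_num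
  rw [exp_pi_div_three_mul_I, exp_five_pi_div_six_mul_I]
  push_cast
  linear_combination ((√3 - 1) / 4 : ℂ) * h

theorem psi_collinear (ψ : ℝ) (hψ : ψ = Real.sqrt 3 + 1) :
    Complex.arg (1 + (ψ⁻¹ : ℝ) * Complex.exp (((2 / 12 : ℝ) * (2 * π)) * Complex.I)) =
    Complex.arg (1 + (ψ⁻¹ : ℝ) * Complex.exp (((5 / 12 : ℝ) * (2 * π)) * Complex.I)) := by
  have h₁ : ((2 / 12 : ℝ) : ℂ) * (2 * π) = (π / 3 : ℝ) := by push_cast; ring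
  have h₂ : ((5 / 12 : ℝ) : ℂ) * (2 * π) = (5 * π / 6 : ℝ) := by push_cast; ring
  rw [h₁, h₂, hψ, inv_sqrt_three_add_one, one_add_mul_exp_pi_div_three_eq_sqrt_three_mul,
    arg_real_mul _ (by positivity)]
end
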